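/- arXiv:2112.11044 — 6 statements merged into one kernel-verified Lean document; each statement's English description precedes it below -/
import Mathlib

section
/- Let L_1, …, L_m be a function-level MRes-R derivation from a prenex QBF with matrix φ. Then for every index i ∈ {1, …, m} and every existential assignment α : X → Bool that falsifies every literal of C_i, there exists a clause C ∈ φ such that α falsifies every existential literal of C and, for every universal literal (u, p) ∈ C, H_i^u α = some (¬p). (In other words, the restriction of φ by α together with the partial universal assignment u ↦ H_i^u α contains the empty clause.) -/
namespace MResR

/-- A clause over `Fin k`: a finite set of literals (variable, polarity). -/
abbrev Clause (k : ℕ) := Finset (Fin k × Bool)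

/-- No variable occurs in both polarities. -/
def IsClause {k : ℕ} (C : Clause k) : Prop :=
  ∀ v : Fin k, ¬ ((v, true) ∈ C ∧ (v, false) ∈ C)

/-- A prenex QBF on `k` variables in prefix order, `q v = true` meaning `v` is
existential, with a CNF matrix. -/
structure QBF (k : ℕ) where
  q : Fin k → Bool
  matrix : Finset (Clause k)
  matrix_clauses : ∀ C ∈ matrix, IsClause C

/-- A candidate strategy function (possibly undefined, `none` playing the role of `*`). -/
abbrev Strategy (k : ℕ) := (Fin k → Bool) → Option Bool

/-- A strategy for the universal variable `u` may only depend on the existential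
variables to the left of `u`. -/
def IsStrategy {k : ℕ} (Q : QBF k) (u : Fin k) (H : Strategy k) : Prop :=
  ∀ α α' : Fin k → Bool, (∀ v : Fin k, Q.q v = true → v < u → α v = α' v) → H α = H α'

/-- Two strategies are consistent if they never give conflicting defined values. -/
def Consistent {k : ℕ} (H H' : Strategy k) : Prop :=
  ∀ (α : Fin k → Bool) (c c' : Bool), H α = some c → H' α = some c' → c = c'

/-- The union `H ∘ H'` of two (consistent) strategies. -/
def unionStrat {k : ℕ} (H H' : Strategy k) : Strategy k :=
  fun α => match H α with
    | some c => some c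
    | none => H' α

/-- The if-else combination `H ⋈x H'`. -/
def iteStrat {k : ℕ} (x : Fin k) (H H' : Strategy k) : Strategy k :=
  fun α => if α x = true then H α else H' α

/-- The existential subclause of a clause. -/
def existSub {k : ℕ} (Q : QBF k) (C : Clause k) : Clause k :=
  C.filter (fun l => Q.q l.1 = true)

/-- The constant strategy introduced by an axiom download of `C`: the constant
`some (¬p)` if `(u, p) ∈ C`, and the constant `none` if `u` does not occur in `C`. -/
def axiomStrat {k : ℕ} (C : Clause k) (u : Fin k) : Strategy k :=
  fun _ => if (u, true) ∈ C then some false else if (u, false) ∈ C then some true else none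

/-- A line of a function-level MRes-R derivation: a clause together with one
strategy function for every variable (only the universal ones are relevant). -/
structure Line (k : ℕ) where
  C : Clause k
  H : Fin k → Strategy k

/-- Justification of a line: axiom download of a matrix clause, or resolution of
two earlier lines on an existential pivot. -/
inductive Just (k : ℕ) where
  | ax : Clause k → Just k
  | res : ℕ → ℕ → Fin k → Just k

/-- Well-formedness of a line: its clause is a clause on existential variables
only, and every universal variable gets a genuine strategy. -/
def LineOK {k : ℕ} (Q : QBF k) (L : Line k) : Prop :=
  IsClause L.C ∧ (∀ l ∈ L.C, Q.q l.1 = true) ∧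
    ∀ u : Fin k, Q.q u = false → IsStrategy Q u (L.H u)

/-- Validity of the `i`-th step of a derivation, given its justification. -/
def StepOK {k : ℕ} (Q : QBF k) (line : ℕ → Line k) : ℕ → Just k → Prop
  | i, .ax C =>
      C ∈ Q.matrix ∧ (line i).C = existSub Q C ∧
      ∀ u : Fin k, Q.q u = false → (line i).H u = axiomStrat C u
  | i, .res a b x =>
      a < i ∧ b < i ∧ Q.q x = true ∧
      (x, true) ∈ (line a).C ∧ (x, false) ∈ (line b).C ∧
      (line i).C = ((line a).C.erase (x, true)) ∪ ((line b).C.erase (x, false)) ∧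
      ∀ u : Fin k, Q.q u = false →
        (x < u → (line i).H u = iteStrat x ((line b).H u) ((line a).H u)) ∧
        (u < x → Consistent ((line a).H u) ((line b).H u) ∧
          (line i).H u = unionStrat ((line a).H u) ((line b).H u))

/-- A function-level MRes-R derivation from the QBF `Q`: lines `0, …, m-1`
(`line i` and `just i` are irrelevant for `i ≥ m`). -/
structure Deriv {k : ℕ} (Q : QBF k) where
  m : ℕ
  m_pos : 0 < m
  line : ℕ → Line k
  just : ℕ → Just k
  lineOK : ∀ i < m, LineOK Q (line i)
  step : ∀ i < m, StepOK Q line i (just i)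

/-- A derivation is a refutation if its final clause is empty. -/
def IsRefutation {k : ℕ} {Q : QBF k} (π : Deriv Q) : Prop :=
  (π.line (π.m - 1)).C = ∅

/-- `α` falsifies every literal of `C`. -/
def FalsifiesClause {k : ℕ} (α : Fin k → Bool) (C : Clause k) : Prop :=
  ∀ l ∈ C, α l.1 = ! l.2

end MResR

open MResR in
/-- For every line `L_i = (C_i, H_i)` of a function-level MRes-R
derivation and every existential assignment `α` falsifying every literal of `C_i`,
there is a matrix clause `C` such that `α` falsifies every existential literal of
`C` and every universal literal `(u, p) ∈ C` satisfies `H_i^u α = some (¬p)`. -/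
theorem mresR_lines_falsify_axiom {k : ℕ} (Q : QBF k) (π : Deriv Q)
    (i : ℕ) (hi : i < π.m) (α : Fin k → Bool)
    (hα : FalsifiesClause α (π.line i).C) :
    ∃ C ∈ Q.matrix,
      (∀ l ∈ C, Q.q l.1 = true → α l.1 = ! l.2) ∧
      (∀ l ∈ C, Q.q l.1 = false → (π.line i).H l.1 α = some (! l.2)) := by

  induction i using Nat.strong_induction_on generalizing α with
  | _ i IH =>
    have hstep := π.step i hi
    cases hj : π.just i with
    | ax C =>
      rw [hj] at hstep
      obtain ⟨hC, hCi, hH⟩ := hstep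
      refine ⟨C, hC, ?_, ?_⟩
      · intro l hl hq
        apply hα
        rw [hCi]
        exact Finset.mem_filter.mpr ⟨hl, hq⟩
      · rintro ⟨u, p⟩ hl hq
        rw [hH u hq]
        unfold axiomStrat
        cases p with
        | false =>
          have hnt : (u, true) ∉ C := fun h => Q.matrix_clauses C hC u ⟨h, hl⟩
          simp [hnt, hl]
        | true => simp [hl]
    | res a b x =>
      rw [hj] at hstep
      obtain ⟨ha, hb, hx, hxa, hxb, hCi, hH⟩ := hstep
      have hune : ∀ u : Fin k, Q.q u = false → u ≠ x := by
        intro u hu h; rw [h, hx] at hu; exact absurd hu (by simp)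
      cases hax : α x with
      | false =>
        have hfa : FalsifiesClause α (π.line a).C := by
          intro l hl
          by_cases hlx : l = (x, true)
          · subst hlx; simpa using hax
          · apply hα
            rw [hCi]
            exact Finset.mem_union_left _ (Finset.mem_erase.mpr ⟨hlx, hl⟩)
        obtain ⟨C, hC, h1, h2⟩ := IH a ha (lt_trans ha hi) α hfa
        refine ⟨C, hC, h1, ?_⟩
        rintro ⟨u, p⟩ hl hq
        have hAa := h2 (u, p) hl hq
        rcases lt_or_gt_of_ne (hune u hq) with hux | hxu
        · have := (hH u hq).2 hux
          rw [this.2]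
          unfold unionStrat
          simp only at hAa ⊢
          rw [hAa]
        · rw [(hH u hq).1 hxu]
          unfold iteStrat
          simp only at hAa ⊢
          rw [hax]
          simpa using hAa
      | true =>
        have hfb : FalsifiesClause α (π.line b).C := by
          intro l hl
          by_cases hlx : l = (x, false)
          · subst hlx; simpa using hax
          · apply hα
            rw [hCi]
            exact Finset.mem_union_right _ (Finset.mem_erase.mpr ⟨hlx, hl⟩)
        obtain ⟨C, hC, h1, h2⟩ := IH b hb (lt_trans hb hi) α hfb
        refine ⟨C, hC, h1, ?_⟩
        rintro ⟨u, p⟩ hl hq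
        have hBb := h2 (u, p) hl hq
        rcases lt_or_gt_of_ne (hune u hq) with hux | hxu
        · obtain ⟨hcons, heq⟩ := (hH u hq).2 hux
          rw [heq]
          unfold unionStrat
          simp only at hBb ⊢
          cases hAa : (π.line a).H u α with
          | none => rw [hBb]
          | some c => rw [hcons α c (!p) hAa hBb]
        · rw [(hH u hq).1 hxu]
          unfold iteStrat
          simp only at hBb ⊢
          rw [hax]
          simpa using hBb
end

section
/- Let Π = L_1, …, L_m be a function-level MRes-R refutation of a prenex QBF with matrix φ (so C_m is the empty clause). Then the strategy functions (H_m^u)_{u ∈ U} of the final line form a countermodel: for every existential assignment α : X → Bool there exists a clause C ∈ φ such that α falsifies every existential literal of C and every universal literal (u, p) ∈ C satisfies H_m^u α = some (¬p). -/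
open MResR in
private lemma mresR_key {k : ℕ} (Q : QBF k) (π : Deriv Q) :
    ∀ i, i < π.m → ∀ α : Fin k → Bool, FalsifiesClause α (π.line i).C →
      ∃ C ∈ Q.matrix,
        (∀ l ∈ C, Q.q l.1 = true → α l.1 = ! l.2) ∧
        (∀ l ∈ C, Q.q l.1 = false → (π.line i).H l.1 α = some (! l.2)) := by
  intro i
  induction i using Nat.strong_induction_on with
  | _ i ih =>
    intro hi α hfal
    have hstep := π.step i hi
    cases hjust : π.just i with
    | ax C =>
      rw [hjust] at hstep
      obtain ⟨hCmat, hCeq, hH⟩ := hstep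
      refine ⟨C, hCmat, ?_, ?_⟩
      · intro l hl hq
        apply hfal
        rw [hCeq]
        exact Finset.mem_filter.mpr ⟨hl, hq⟩
      · rintro ⟨u, p⟩ hl hq
        rw [hH u hq]
        have hcl := Q.matrix_clauses C hCmat u
        unfold axiomStrat
        cases p with
        | true => simp [hl]
        | false =>
          have hnt : (u, true) ∉ C := fun h => hcl ⟨h, hl⟩
          simp [hnt, hl]
    | res a b x =>
      rw [hjust] at hstep
      obtain ⟨ha, hb, hqx, hxa, hxb, hCeq, hHs⟩ := hstep
      cases hax : α x with
      | false =>
        have hfa : FalsifiesClause α (π.line a).C := by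
          intro l hl
          by_cases hlx : l = (x, true)
          · simp [hlx, hax]
          · apply hfal
            rw [hCeq]
            exact Finset.mem_union_left _ (Finset.mem_erase.mpr ⟨hlx, hl⟩)
        obtain ⟨C, hCm, hex, hun⟩ := ih a ha (ha.trans hi) α hfa
        refine ⟨C, hCm, hex, ?_⟩
        rintro ⟨u, p⟩ hl hq
        have hux : u ≠ x := by
          intro h; rw [h, hqx] at hq; exact Bool.noConfusion hq
        have hav := hun (u, p) hl hq
        rcases lt_or_gt_of_ne hux with hlt | hgt
        · rw [((hHs u hq).2 hlt).2]
          unfold unionStrat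
          rw [hav]
        · rw [(hHs u hq).1 hgt]
          unfold iteStrat
          simpa [hax] using hav
      | true =>
        have hfb : FalsifiesClause α (π.line b).C := by
          intro l hl
          by_cases hlx : l = (x, false)
          · simp [hlx, hax]
          · apply hfal
            rw [hCeq]
            exact Finset.mem_union_right _ (Finset.mem_erase.mpr ⟨hlx, hl⟩)
        obtain ⟨C, hCm, hex, hun⟩ := ih b hb (hb.trans hi) α hfb
        refine ⟨C, hCm, hex, ?_⟩
        rintro ⟨u, p⟩ hl hq
        have hux : u ≠ x := by
          intro h; rw [h, hqx] at hq; exact Bool.noConfusion hq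
        have hbv := hun (u, p) hl hq
        rcases lt_or_gt_of_ne hux with hlt | hgt
        · have hcons := ((hHs u hq).2 hlt).1
          rw [((hHs u hq).2 hlt).2]
          unfold unionStrat
          cases hA : (π.line a).H u α with
          | none => exact hbv
          | some c => rw [hcons α c (!p) hA hbv]
        · rw [(hHs u hq).1 hgt]
          unfold iteStrat
          simpa [hax] using hbv

open MResR in
/-- **soundness.** The strategy functions of the final line of a
function-level MRes-R refutation form a countermodel: for every existential
assignment `α` there is a matrix clause `C` such that `α` falsifies every
existential literal of `C` and every universal literal `(u, p) ∈ C` satisfies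
`H_m^u α = some (¬p)`. -/
theorem mresR_soundness {k : ℕ} (Q : QBF k) (π : Deriv Q)
    (href : IsRefutation π) :
    ∀ α : Fin k → Bool, ∃ C ∈ Q.matrix,
      (∀ l ∈ C, Q.q l.1 = true → α l.1 = ! l.2) ∧
      (∀ l ∈ C, Q.q l.1 = false → (π.line (π.m - 1)).H l.1 α = some (! l.2)) := by
  intro α
  refine mresR_key Q π (π.m - 1) (Nat.sub_lt π.m_pos one_pos) α ?_
  intro l hl
  rw [IsRefutation] at href
  rw [href] at hl
  exact absurd hl (Finset.notMem_empty l)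
end

section
/- Every false prenex QBF has a function-level MRes-R refutation (refutational completeness of the function-level MRes-R calculus). -/
namespace MResR

/-- A total assignment satisfies the matrix if every clause contains a literal it sets true. -/
def SatisfiedBy {k : ℕ} (φ : Finset (Clause k)) (β : Fin k → Bool) : Prop :=
  ∀ C ∈ φ, ∃ l ∈ C, β l.1 = l.2

/-- Truth of the QBF from position `i` of the prefix onwards, the variables
before `i` having already been assigned by `β`. -/
def TrueFrom {k : ℕ} (Q : QBF k) (i : ℕ) (β : Fin k → Bool) : Prop :=
  if h : i < k then
    if Q.q ⟨i, h⟩ = true then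
      ∃ c : Bool, TrueFrom Q (i + 1) (Function.update β ⟨i, h⟩ c)
    else
      ∀ c : Bool, TrueFrom Q (i + 1) (Function.update β ⟨i, h⟩ c)
  else SatisfiedBy Q.matrix β
termination_by k - i
decreasing_by all_goals omega

/-- Truth of a prenex QBF: evaluate the quantifier prefix from the left. -/
def QBFTrue {k : ℕ} (Q : QBF k) : Prop :=
  TrueFrom Q 0 (fun _ => false)

end MResR


namespace MResR

variable {k : ℕ}

open Classical in
/-- The universal player's choice at position `i`: a value making the rest false,
if one exists. -/
noncomputable def pickU (Q : QBF k) (i : ℕ) (h : i < k) (β : Fin k → Bool) : Bool :=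
  if TrueFrom Q (i + 1) (Function.update β ⟨i, h⟩ false) then true else false

/-- The play where existentials follow `α` and universals follow the falsifying choice. -/
noncomputable def counter (Q : QBF k) (α : Fin k → Bool) : ℕ → (Fin k → Bool) → (Fin k → Bool)
  | i, β =>
    if h : i < k then
      if Q.q ⟨i, h⟩ = true then counter Q α (i + 1) (Function.update β ⟨i, h⟩ (α ⟨i, h⟩))
      else counter Q α (i + 1) (Function.update β ⟨i, h⟩ (pickU Q i h β))
    else β
termination_by i => k - i

lemma counter_unsat (Q : QBF k) (α : Fin k → Bool) :
    ∀ i β, ¬ TrueFrom Q i β → ¬ SatisfiedBy Q.matrix (counter Q α i β) := by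
  suffices h : ∀ n i, k - i ≤ n → ∀ β, ¬ TrueFrom Q i β →
      ¬ SatisfiedBy Q.matrix (counter Q α i β) by
    intro i β hT; exact h (k - i) i le_rfl β hT
  intro n
  induction n with
  | zero =>
    intro i hi β hT
    have h : ¬ i < k := by omega
    rw [counter]; simp only [dif_neg h]
    rw [TrueFrom] at hT; simp only [dif_neg h] at hT
    exact hT
  | succ n ih =>
    intro i hi β hT
    rw [counter]
    by_cases h : i < k
    · simp only [dif_pos h]
      rw [TrueFrom] at hT; simp only [dif_pos h] at hT
      by_cases hq : Q.q ⟨i, h⟩ = true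
      · simp only [if_pos hq] at hT ⊢
        push_neg at hT
        exact ih (i + 1) (by omega) _ (hT (α ⟨i, h⟩))
      · simp only [if_neg hq] at hT ⊢
        apply ih (i + 1) (by omega)
        unfold pickU
        by_cases h0 : TrueFrom Q (i + 1) (Function.update β ⟨i, h⟩ false)
        · rw [if_pos h0]
          intro h1
          exact hT fun c => by cases c <;> assumption
        · rw [if_neg h0]; exact h0
    · simp only [dif_neg h]
      rw [TrueFrom] at hT; simp only [dif_neg h] at hT
      exact hT

lemma counter_frozen (Q : QBF k) (α : Fin k → Bool) :
    ∀ i β (v : Fin k), (v : ℕ) < i → counter Q α i β v = β v := by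
  suffices h : ∀ n i, k - i ≤ n → ∀ β (v : Fin k), (v : ℕ) < i →
      counter Q α i β v = β v by
    intro i β v hv; exact h (k - i) i le_rfl β v hv
  intro n
  induction n with
  | zero =>
    intro i hi β v hv
    have h : ¬ i < k := by omega
    rw [counter]; simp only [dif_neg h]
  | succ n ih =>
    intro i hi β v hv
    rw [counter]
    by_cases h : i < k
    · simp only [dif_pos h]
      have hne : v ≠ (⟨i, h⟩ : Fin k) := by
        intro he; rw [he] at hv; exact absurd hv (lt_irrefl i)
      by_cases hq : Q.q ⟨i, h⟩ = true
      · rw [if_pos hq, ih (i + 1) (by omega) _ v (by omega),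
          Function.update_of_ne hne]
      · rw [if_neg hq, ih (i + 1) (by omega) _ v (by omega),
          Function.update_of_ne hne]
    · simp only [dif_neg h]

lemma counter_exist (Q : QBF k) (α : Fin k → Bool) :
    ∀ i β (v : Fin k), i ≤ (v : ℕ) → Q.q v = true → counter Q α i β v = α v := by
  suffices h : ∀ n i, k - i ≤ n → ∀ β (v : Fin k), i ≤ (v : ℕ) → Q.q v = true →
      counter Q α i β v = α v by
    intro i β v hv hq; exact h (k - i) i le_rfl β v hv hq
  intro n
  induction n with
  | zero =>
    intro i hi β v hv hq
    have := v.isLt; omega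
  | succ n ih =>
    intro i hi β v hv hq
    have h : i < k := lt_of_le_of_lt hv v.isLt
    rw [counter]; simp only [dif_pos h]
    rcases eq_or_lt_of_le hv with heq | hlt
    · have hev : (⟨i, h⟩ : Fin k) = v := Fin.ext heq
      rw [hev, hq, if_pos rfl,
        counter_frozen Q α (i + 1) _ v (by omega), Function.update_self]
    · by_cases hq' : Q.q ⟨i, h⟩ = true
      · rw [if_pos hq']; exact ih (i + 1) (by omega) _ v hlt hq
      · rw [if_neg hq']; exact ih (i + 1) (by omega) _ v hlt hq

lemma counter_congr (Q : QBF k) (α α' : Fin k → Bool) (u : Fin k) (hu : Q.q u = false) :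
    ∀ i β, (∀ v : Fin k, Q.q v = true → v < u → α v = α' v) →
      counter Q α i β u = counter Q α' i β u := by
  suffices h : ∀ n i, k - i ≤ n → ∀ β, (∀ v : Fin k, Q.q v = true → v < u → α v = α' v) →
      counter Q α i β u = counter Q α' i β u by
    intro i β hag; exact h (k - i) i le_rfl β hag
  intro n
  induction n with
  | zero =>
    intro i hi β hag
    have h : ¬ i < k := by omega
    rw [counter, counter]; simp only [dif_neg h]
  | succ n ih =>
    intro i hi β hag
    rw [counter, counter]
    by_cases h : i < k
    · simp only [dif_pos h]
      by_cases hq : Q.q ⟨i, h⟩ = true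
      · simp only [if_pos hq]
        by_cases hiu : (⟨i, h⟩ : Fin k) < u
        · rw [hag ⟨i, h⟩ hq hiu]
          exact ih (i + 1) (by omega) _ hag
        · have hne : (u : ℕ) ≠ i := by
            intro he
            have hqu : Q.q ⟨i, h⟩ = false := by
              rw [show (⟨i, h⟩ : Fin k) = u from Fin.ext he.symm, hu]
            rw [hqu] at hq; exact Bool.false_ne_true hq
          have hui : (u : ℕ) < i + 1 := by
            have : ¬ (i < (u : ℕ)) := fun hc => hiu (by exact hc)
            omega
          rw [counter_frozen Q α (i + 1) _ u hui,
            counter_frozen Q α' (i + 1) _ u hui,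
            Function.update_of_ne (by intro he; exact hne (by rw [he])),
            Function.update_of_ne (by intro he; exact hne (by rw [he]))]
      · simp only [if_neg hq]
        exact ih (i + 1) (by omega) _ hag
    · simp only [dif_neg h]

/-- The universal winning strategy extracted from falsity. -/
noncomputable def hstrat (Q : QBF k) (u : Fin k) (α : Fin k → Bool) : Bool :=
  counter Q α 0 (fun _ => false) u

lemma exists_falsified (Q : QBF k) (hf : ¬ QBFTrue Q) (α : Fin k → Bool) :
    ∃ C ∈ Q.matrix, ∀ l ∈ C, counter Q α 0 (fun _ => false) l.1 = !l.2 := by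
  have h := counter_unsat Q α 0 (fun _ => false) hf
  unfold SatisfiedBy at h
  push_neg at h
  obtain ⟨C, hC, hl⟩ := h
  refine ⟨C, hC, fun l hlC => ?_⟩
  have := hl l hlC
  cases hb : counter Q α 0 (fun _ => false) l.1 <;> cases h2 : l.2 <;> simp_all

/-- A falsified clause along the counter-play for `α`. -/
noncomputable def falsC (Q : QBF k) (hf : ¬ QBFTrue Q) (α : Fin k → Bool) : Clause k :=
  (exists_falsified Q hf α).choose

lemma falsC_mem (Q : QBF k) (hf : ¬ QBFTrue Q) (α : Fin k → Bool) :
    falsC Q hf α ∈ Q.matrix :=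
  (exists_falsified Q hf α).choose_spec.1

lemma falsC_fals (Q : QBF k) (hf : ¬ QBFTrue Q) (α : Fin k → Bool) :
    ∀ l ∈ falsC Q hf α, counter Q α 0 (fun _ => false) l.1 = !l.2 :=
  (exists_falsified Q hf α).choose_spec.2

/-- There is a derivation from `Q` whose last line is `L`. -/
def EndsWith (Q : QBF k) (L : Line k) : Prop :=
  ∃ π : Deriv Q, π.line (π.m - 1) = L

lemma stepOK_congr {Q : QBF k} {line line' : ℕ → Line k} {i : ℕ} {J : Just k}
    (h : ∀ j ≤ i, line j = line' j) (hs : StepOK Q line i J) : StepOK Q line' i J := by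
  cases J with
  | ax C =>
    obtain ⟨h1, h2, h3⟩ := hs
    exact ⟨h1, (h i le_rfl) ▸ h2, (h i le_rfl) ▸ h3⟩
  | res a b x =>
    obtain ⟨ha, hb, hx, h4, h5, h6, h7⟩ := hs
    refine ⟨ha, hb, hx, ?_, ?_, ?_, ?_⟩ <;>
      simp only [← h a (le_of_lt ha), ← h b (le_of_lt hb), ← h i le_rfl] <;> assumption

/-- Shift the line references of a justification. -/
def shiftJ (n : ℕ) : Just k → Just k
  | .ax C => .ax C
  | .res a b x => .res (a + n) (b + n) x

/-- Concatenated line function. -/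
def glueLine (mA mB : ℕ) (lA lB : ℕ → Line k) (L : Line k) : ℕ → Line k := fun i =>
  if i < mA then lA i else if i < mA + mB then lB (i - mA) else L

/-- Concatenated justification function. -/
def glueJust (mA mB : ℕ) (jA jB : ℕ → Just k) (x : Fin k) : ℕ → Just k := fun i =>
  if i < mA then jA i
  else if i < mA + mB then shiftJ mA (jB (i - mA))
  else .res (mA - 1) (mA + mB - 1) x

lemma glueLine_eq1 {mA mB : ℕ} {lA lB : ℕ → Line k} {L : Line k} {i : ℕ} (h : i < mA) :
    glueLine mA mB lA lB L i = lA i := by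
  unfold glueLine; rw [if_pos h]

lemma glueLine_eq2 {mA mB : ℕ} {lA lB : ℕ → Line k} {L : Line k} {i : ℕ}
    (h1 : mA ≤ i) (h2 : i < mA + mB) : glueLine mA mB lA lB L i = lB (i - mA) := by
  unfold glueLine; rw [if_neg (by omega), if_pos h2]

lemma glueLine_eq3 {mA mB : ℕ} {lA lB : ℕ → Line k} {L : Line k} {i : ℕ}
    (h : mA + mB ≤ i) : glueLine mA mB lA lB L i = L := by
  unfold glueLine; rw [if_neg (by omega), if_neg (by omega)]

lemma endsWith_ax (Q : QBF k) (C : Clause k) (hC : C ∈ Q.matrix) (L : Line k)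
    (hok : LineOK Q L) (h1 : L.C = existSub Q C)
    (h2 : ∀ u : Fin k, Q.q u = false → L.H u = axiomStrat C u) :
    EndsWith Q L := by
  refine ⟨⟨1, one_pos, fun _ => L, fun _ => .ax C, fun i _ => hok, fun i _ => ?_⟩, rfl⟩
  exact ⟨hC, h1, h2⟩

lemma endsWith_res (Q : QBF k) (A B L : Line k) (x : Fin k)
    (hA : EndsWith Q A) (hB : EndsWith Q B) (hok : LineOK Q L)
    (hx : Q.q x = true) (hxa : (x, true) ∈ A.C) (hxb : (x, false) ∈ B.C)
    (hC : L.C = (A.C.erase (x, true)) ∪ (B.C.erase (x, false)))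
    (hH : ∀ u : Fin k, Q.q u = false →
      (x < u → L.H u = iteStrat x (B.H u) (A.H u)) ∧
      (u < x → Consistent (A.H u) (B.H u) ∧ L.H u = unionStrat (A.H u) (B.H u))) :
    EndsWith Q L := by
  obtain ⟨πA, hAe⟩ := hA
  obtain ⟨πB, hBe⟩ := hB
  have hmA := πA.m_pos
  have hmB := πB.m_pos
  refine ⟨⟨πA.m + πB.m + 1, by omega,
    glueLine πA.m πB.m πA.line πB.line L,
    glueJust πA.m πB.m πA.just πB.just x, ?_, ?_⟩, ?_⟩
  · intro i hi
    by_cases h1 : i < πA.m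
    · rw [glueLine_eq1 h1]; exact πA.lineOK i h1
    · by_cases h2 : i < πA.m + πB.m
      · rw [glueLine_eq2 (by omega) h2]; exact πB.lineOK (i - πA.m) (by omega)
      · rw [glueLine_eq3 (by omega)]; exact hok
  · intro i hi
    by_cases h1 : i < πA.m
    · have hJ : glueJust πA.m πB.m πA.just πB.just x i = πA.just i := by
        unfold glueJust; rw [if_pos h1]
      rw [hJ]
      refine stepOK_congr (fun j hj => ?_) (πA.step i h1)
      rw [glueLine_eq1 (lt_of_le_of_lt hj h1)]
    · by_cases h2 : i < πA.m + πB.m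
      · have hJ : glueJust πA.m πB.m πA.just πB.just x i
            = shiftJ πA.m (πB.just (i - πA.m)) := by
          unfold glueJust; rw [if_neg h1, if_pos h2]
        rw [hJ]
        have hs := πB.step (i - πA.m) (by omega)
        cases hJ2 : πB.just (i - πA.m) with
        | ax C =>
          rw [hJ2] at hs
          obtain ⟨hc1, hc2, hc3⟩ := hs
          refine ⟨hc1, ?_, ?_⟩ <;> rw [glueLine_eq2 (by omega) h2] <;> assumption
        | res a b y =>
          rw [hJ2] at hs
          obtain ⟨ha, hb, hy, h4, h5, h6, h7⟩ := hs
          show StepOK Q _ i (.res (a + πA.m) (b + πA.m) y)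
          have ea : glueLine πA.m πB.m πA.line πB.line L (a + πA.m) = πB.line a := by
            rw [glueLine_eq2 (by omega) (by omega), Nat.add_sub_cancel]
          have eb : glueLine πA.m πB.m πA.line πB.line L (b + πA.m) = πB.line b := by
            rw [glueLine_eq2 (by omega) (by omega), Nat.add_sub_cancel]
          have ei : glueLine πA.m πB.m πA.line πB.line L i = πB.line (i - πA.m) := by
            rw [glueLine_eq2 (by omega) h2]
          refine ⟨by omega, by omega, hy, ?_, ?_, ?_, ?_⟩ <;>
            simp only [ea, eb, ei] <;> assumption
      · have hJ : glueJust πA.m πB.m πA.just πB.just x i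
            = .res (πA.m - 1) (πA.m + πB.m - 1) x := by
          unfold glueJust; rw [if_neg h1, if_neg h2]
        rw [hJ]
        have ea : glueLine πA.m πB.m πA.line πB.line L (πA.m - 1) = A := by
          rw [glueLine_eq1 (by omega)]; exact hAe
        have eb : glueLine πA.m πB.m πA.line πB.line L (πA.m + πB.m - 1) = B := by
          rw [glueLine_eq2 (by omega) (by omega)]
          rw [show πA.m + πB.m - 1 - πA.m = πB.m - 1 by omega]
          exact hBe
        have ei : glueLine πA.m πB.m πA.line πB.line L i = L := by
          rw [glueLine_eq3 (by omega)]
        refine ⟨by omega, by omega, hx, ?_, ?_, ?_, ?_⟩ <;>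
          simp only [ea, eb, ei] <;> assumption
  · show glueLine πA.m πB.m πA.line πB.line L (πA.m + πB.m + 1 - 1) = L
    rw [glueLine_eq3 (by omega)]

lemma build_base (Q : QBF k) (hf : ¬ QBFTrue Q) (σ : Fin k → Bool) :
    ∃ L : Line k, EndsWith Q L ∧ LineOK Q L ∧ FalsifiesClause σ L.C ∧
      (∀ l ∈ L.C, (l.1 : ℕ) < k) ∧
      (∀ u : Fin k, Q.q u = false →
        ∀ α, L.H u α = none ∨ L.H u α = some (hstrat Q u σ)) := by
  have hfals := falsC_fals Q hf σ
  refine ⟨⟨existSub Q (falsC Q hf σ), fun u => axiomStrat (falsC Q hf σ) u⟩,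
    ?_, ?_, ?_, ?_, ?_⟩
  case refine_2 =>
    refine ⟨?_, ?_, ?_⟩
    · intro v ⟨h1, h2⟩
      rw [existSub, Finset.mem_filter] at h1 h2
      exact Q.matrix_clauses _ (falsC_mem Q hf σ) v ⟨h1.1, h2.1⟩
    · intro l hl
      exact (Finset.mem_filter.mp hl).2
    · intro u _ α α' _
      rfl
  case refine_1 =>
    apply endsWith_ax Q _ (falsC_mem Q hf σ) _ ?_ rfl (fun u _ => rfl)
    refine ⟨?_, ?_, ?_⟩
    · intro v ⟨h1, h2⟩
      rw [existSub, Finset.mem_filter] at h1 h2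
      exact Q.matrix_clauses _ (falsC_mem Q hf σ) v ⟨h1.1, h2.1⟩
    · intro l hl
      exact (Finset.mem_filter.mp hl).2
    · intro u _ α α' _
      rfl
  · intro l hl
    obtain ⟨hl1, hl2⟩ := Finset.mem_filter.mp hl
    have h1 := hfals l hl1
    rw [counter_exist Q σ 0 _ l.1 (Nat.zero_le _) hl2] at h1
    exact h1
  · intro l _
    exact l.1.isLt
  · intro u _ α
    show axiomStrat (falsC Q hf σ) u α = none ∨
      axiomStrat (falsC Q hf σ) u α = some (hstrat Q u σ)
    unfold axiomStrat
    by_cases ht : (u, true) ∈ falsC Q hf σ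
    · right
      rw [if_pos ht]
      have := hfals (u, true) ht
      unfold hstrat
      rw [this]
      rfl
    · by_cases hfm : (u, false) ∈ falsC Q hf σ
      · right
        rw [if_neg ht, if_pos hfm]
        have := hfals (u, false) hfm
        unfold hstrat
        rw [this]
        rfl
      · left
        rw [if_neg ht, if_neg hfm]

lemma build (Q : QBF k) (hf : ¬ QBFTrue Q) :
    ∀ n i, k - i ≤ n → ∀ σ : Fin k → Bool,
      ∃ L : Line k, EndsWith Q L ∧ LineOK Q L ∧ FalsifiesClause σ L.C ∧
        (∀ l ∈ L.C, (l.1 : ℕ) < i) ∧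
        (∀ u : Fin k, Q.q u = false → (u : ℕ) < i →
          ∀ α, L.H u α = none ∨ L.H u α = some (hstrat Q u σ)) := by
  intro n
  induction n with
  | zero =>
    intro i hi σ
    obtain ⟨L, h1, h2, h3, h4, h5⟩ := build_base Q hf σ
    exact ⟨L, h1, h2, h3, fun l hl => by have := h4 l hl; omega,
      fun u hu _ α => h5 u hu α⟩
  | succ n ih =>
    intro i hi σ
    by_cases hik : k ≤ i
    · obtain ⟨L, h1, h2, h3, h4, h5⟩ := build_base Q hf σ
      exact ⟨L, h1, h2, h3, fun l hl => by have := h4 l hl; omega,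
        fun u hu _ α => h5 u hu α⟩
    · push_neg at hik
      set x : Fin k := ⟨i, hik⟩ with hxdef
      by_cases hq : Q.q x = true
      · -- existential variable at position i
        obtain ⟨Lt, ht1, ht2, ht3, ht4, ht5⟩ :=
          ih (i + 1) (by omega) (Function.update σ x true)
        obtain ⟨Lf, hf1, hf2, hf3, hf4, hf5⟩ :=
          ih (i + 1) (by omega) (Function.update σ x false)
        have hsc : ∀ (u : Fin k), Q.q u = false → (u : ℕ) < i → ∀ b : Bool,
            hstrat Q u (Function.update σ x b) = hstrat Q u σ := by
          intro u hu hui b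
          unfold hstrat
          apply counter_congr Q _ _ u hu 0
          intro v hv hvu
          apply Function.update_of_ne
          intro he
          rw [he] at hvu
          have h := Fin.lt_def.mp hvu
          rw [hxdef] at h
          simp only at h
          omega
        by_cases hmt : (x, false) ∈ Lt.C
        · by_cases hmf : (x, true) ∈ Lf.C
          · -- genuine resolution step
            have hkeyf : ∀ l ∈ Lf.C.erase (x, true), σ l.1 = !l.2 ∧ (l.1 : ℕ) < i := by
              intro l hl
              obtain ⟨hne, hmem⟩ := Finset.mem_erase.mp hl
              have h3 := hf3 l hmem
              have hnx : l.1 ≠ x := by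
                intro he
                rw [he, Function.update_self] at h3
                have hc : l.2 = true := by
                  cases hc2 : l.2
                  · rw [hc2] at h3; simp at h3
                  · rfl
                exact hne (Prod.ext he hc)
              refine ⟨by rwa [Function.update_of_ne hnx] at h3, ?_⟩
              have hb := hf4 l hmem
              have hni : (l.1 : ℕ) ≠ i := fun he =>
                hnx (Fin.ext (by rw [hxdef]; exact he))
              omega
            have hkeyt : ∀ l ∈ Lt.C.erase (x, false), σ l.1 = !l.2 ∧ (l.1 : ℕ) < i := by
              intro l hl
              obtain ⟨hne, hmem⟩ := Finset.mem_erase.mp hl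
              have h3 := ht3 l hmem
              have hnx : l.1 ≠ x := by
                intro he
                rw [he, Function.update_self] at h3
                have hc : l.2 = false := by
                  cases hc2 : l.2
                  · rfl
                  · rw [hc2] at h3; simp at h3
                exact hne (Prod.ext he hc)
              refine ⟨by rwa [Function.update_of_ne hnx] at h3, ?_⟩
              have hb := ht4 l hmem
              have hni : (l.1 : ℕ) ≠ i := fun he =>
                hnx (Fin.ext (by rw [hxdef]; exact he))
              omega
            have hDfals : FalsifiesClause σ
                ((Lf.C.erase (x, true)) ∪ (Lt.C.erase (x, false))) := by
              intro l hl
              rcases Finset.mem_union.mp hl with h | h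
              exacts [(hkeyf l h).1, (hkeyt l h).1]
            have hDbd : ∀ l ∈ (Lf.C.erase (x, true)) ∪ (Lt.C.erase (x, false)),
                (l.1 : ℕ) < i := by
              intro l hl
              rcases Finset.mem_union.mp hl with h | h
              exacts [(hkeyf l h).2, (hkeyt l h).2]
            have hok : LineOK Q ⟨(Lf.C.erase (x, true)) ∪ (Lt.C.erase (x, false)),
                fun u => if x < u then iteStrat x (Lt.H u) (Lf.H u)
                  else unionStrat (Lf.H u) (Lt.H u)⟩ := by
              refine ⟨?_, ?_, ?_⟩
              · intro v ⟨h1, h2⟩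
                have e1 := hDfals (v, true) h1
                have e2 := hDfals (v, false) h2
                simp only [Bool.not_true, Bool.not_false] at e1 e2
                rw [e1] at e2
                exact Bool.false_ne_true e2
              · intro l hl
                rcases Finset.mem_union.mp hl with h | h
                · exact hf2.2.1 l (Finset.mem_of_mem_erase h)
                · exact ht2.2.1 l (Finset.mem_of_mem_erase h)
              · intro u hu
                show IsStrategy Q u (if x < u then iteStrat x (Lt.H u) (Lf.H u)
                  else unionStrat (Lf.H u) (Lt.H u))
                by_cases hxu : x < u
                · rw [if_pos hxu]
                  intro α α' hag
                  unfold iteStrat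
                  rw [hag x hq hxu, ht2.2.2 u hu α α' hag, hf2.2.2 u hu α α' hag]
                · rw [if_neg hxu]
                  intro α α' hag
                  unfold unionStrat
                  rw [hf2.2.2 u hu α α' hag, ht2.2.2 u hu α α' hag]
            refine ⟨⟨(Lf.C.erase (x, true)) ∪ (Lt.C.erase (x, false)),
              fun u => if x < u then iteStrat x (Lt.H u) (Lf.H u)
                else unionStrat (Lf.H u) (Lt.H u)⟩, ?_, hok, hDfals, hDbd, ?_⟩
            · -- EndsWith, via the resolution rule
              apply endsWith_res Q Lf Lt _ x hf1 ht1 hok hq hmf hmt rfl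
              intro u hu
              constructor
              · intro hxu
                show (if x < u then iteStrat x (Lt.H u) (Lf.H u)
                  else unionStrat (Lf.H u) (Lt.H u)) = iteStrat x (Lt.H u) (Lf.H u)
                rw [if_pos hxu]
              · intro hux
                have hnxu : ¬ x < u := lt_asymm hux
                have hui : (u : ℕ) < i := by
                  have h := Fin.lt_def.mp hux
                  rw [hxdef] at h
                  exact h
                refine ⟨?_, ?_⟩
                · intro α c c' hc hc'
                  rcases hf5 u hu (by omega) α with h | h
                  · rw [hc] at h; exact absurd h (by simp)
                  · rcases ht5 u hu (by omega) α with h' | h'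
                    · rw [hc'] at h'; exact absurd h' (by simp)
                    · rw [hc] at h; rw [hc'] at h'
                      have e1 := Option.some.inj h
                      have e2 := Option.some.inj h'
                      rw [e1, e2, hsc u hu hui false, hsc u hu hui true]
                · show (if x < u then iteStrat x (Lt.H u) (Lf.H u)
                    else unionStrat (Lf.H u) (Lt.H u)) = unionStrat (Lf.H u) (Lt.H u)
                  rw [if_neg hnxu]
            · -- the strategy invariant
              intro u hu hui α
              have hnxu : ¬ x < u := by
                intro hc
                have h := Fin.lt_def.mp hc
                rw [hxdef] at h
                simp only at h
                omega
              show (if x < u then iteStrat x (Lt.H u) (Lf.H u)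
                  else unionStrat (Lf.H u) (Lt.H u)) α = none ∨
                (if x < u then iteStrat x (Lt.H u) (Lf.H u)
                  else unionStrat (Lf.H u) (Lt.H u)) α = some (hstrat Q u σ)
              rw [if_neg hnxu]
              cases hLfv : Lf.H u α with
              | none =>
                have he : unionStrat (Lf.H u) (Lt.H u) α = Lt.H u α := by
                  simp only [unionStrat, hLfv]
                rw [he]
                rcases ht5 u hu (by omega) α with h | h
                · exact Or.inl h
                · right; rw [h, hsc u hu hui true]
              | some c =>
                have he : unionStrat (Lf.H u) (Lt.H u) α = some c := by
                  simp only [unionStrat, hLfv]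
                rw [he]
                right
                rcases hf5 u hu (by omega) α with h | h
                · rw [hLfv] at h; exact absurd h (by simp)
                · rw [hLfv] at h
                  rw [Option.some.inj h, hsc u hu hui false]
          · -- keep the false-branch line
            have hnx : ∀ l ∈ Lf.C, l.1 ≠ x := by
              intro l hl he
              have h3 := hf3 l hl
              rw [he, Function.update_self] at h3
              have hc : l.2 = true := by
                  cases hc2 : l.2
                  · rw [hc2] at h3; simp at h3
                  · rfl
              exact hmf ((Prod.ext he hc : l = (x, true)) ▸ hl)
            refine ⟨Lf, hf1, hf2, ?_, ?_, ?_⟩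
            · intro l hl
              have h3 := hf3 l hl
              rwa [Function.update_of_ne (hnx l hl)] at h3
            · intro l hl
              have hb := hf4 l hl
              have : (l.1 : ℕ) ≠ i := fun he =>
                hnx l hl (Fin.ext (by rw [hxdef]; exact he))
              omega
            · intro u hu hui α
              rcases hf5 u hu (by omega) α with h | h
              · exact Or.inl h
              · right; rw [h, hsc u hu hui false]
        · -- keep the true-branch line
          have hnx : ∀ l ∈ Lt.C, l.1 ≠ x := by
            intro l hl he
            have h3 := ht3 l hl
            rw [he, Function.update_self] at h3
            have hc : l.2 = false := by
                  cases hc2 : l.2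
                  · rfl
                  · rw [hc2] at h3; simp at h3
            exact hmt ((Prod.ext he hc : l = (x, false)) ▸ hl)
          refine ⟨Lt, ht1, ht2, ?_, ?_, ?_⟩
          · intro l hl
            have h3 := ht3 l hl
            rwa [Function.update_of_ne (hnx l hl)] at h3
          · intro l hl
            have hb := ht4 l hl
            have : (l.1 : ℕ) ≠ i := fun he =>
              hnx l hl (Fin.ext (by rw [hxdef]; exact he))
            omega
          · intro u hu hui α
            rcases ht5 u hu (by omega) α with h | h
            · exact Or.inl h
            · right; rw [h, hsc u hu hui true]
      · -- universal variable at position i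
        obtain ⟨L, h1, h2, h3, h4, h5⟩ := ih (i + 1) (by omega) σ
        refine ⟨L, h1, h2, h3, ?_, ?_⟩
        · intro l hl
          have hb := h4 l hl
          have hql := h2.2.1 l hl
          have : (l.1 : ℕ) ≠ i := by
            intro he
            have hlx : l.1 = x := Fin.ext (by rw [hxdef]; exact he)
            rw [hlx] at hql
            exact hq hql
          omega
        · intro u hu hui α
          exact h5 u hu (by omega) α

end MResR

open MResR in
/-- **refutational completeness.** Every false prenex QBF has a
function-level MRes-R refutation. -/
theorem mresR_refutationally_complete {k : ℕ} (Q : QBF k) (hfalse : ¬ QBFTrue Q) :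
    ∃ π : Deriv Q, IsRefutation π := by
  obtain ⟨L, hE, _, _, hbd, _⟩ := build Q hfalse k 0 (by omega) (fun _ => false)
  have hempty : L.C = ∅ :=
    Finset.eq_empty_of_forall_notMem fun l hl => absurd (hbd l hl) (Nat.not_lt_zero _)
  obtain ⟨π, hπ⟩ := hE
  refine ⟨π, ?_⟩
  unfold IsRefutation
  rw [hπ, hempty]
end

section
/- Let V be a finite type and let F be a finite set of clauses over V. Assume every clause of F mentions at least w distinct variables, and that F is unsatisfiable in the strong sense that for every assignment α : V → Bool there is a clause C ∈ F all of whose literals (v, p) satisfy α v ≠ p. Then F contains at least 2^w clauses. -/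
lemma fixed_on_card {V : Type*} [Fintype V] [DecidableEq V] (s : Finset V) (g : V → Bool) :
    (Finset.univ.filter (fun α : V → Bool => ∀ v ∈ s, α v = g v)).card
      = 2 ^ (Fintype.card V - s.card) := by
  have e : {α : V → Bool // ∀ v ∈ s, α v = g v} ≃ ({v : V // v ∉ s} → Bool) :=
    { toFun := fun α v => α.1 v.1
      invFun := fun h => ⟨fun v => if hv : v ∈ s then g v else h ⟨v, hv⟩,
        fun v hv => by simp [hv]⟩
      left_inv := by
        rintro ⟨α, hα⟩
        ext v
        by_cases hv : v ∈ s <;> simp [hv, hα v]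
      right_inv := by
        intro h
        ext ⟨v, hv⟩
        simp [hv] }
  have h1 : (Finset.univ.filter (fun α : V → Bool => ∀ v ∈ s, α v = g v)).card
      = Fintype.card {α : V → Bool // ∀ v ∈ s, α v = g v} := by
    rw [Fintype.card_subtype]
  rw [h1, Fintype.card_congr e, Fintype.card_fun, Fintype.card_bool]
  congr 1
  have : Fintype.card {v : V // v ∈ s} = s.card := Fintype.card_coe s
  have h2 := Fintype.card_subtype_compl (fun v : V => v ∈ s)
  simp only [this] at h2
  exact h2

/-- If every clause of a finite CNF `F` over a finite variable
type `V` mentions at least `w` distinct variables, and `F` is unsatisfiable in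
the strong sense that every assignment falsifies every literal of some clause of
`F`, then `F` has at least `2 ^ w` clauses. -/
theorem wide_strongly_unsat_cnf_large {V : Type*} [Fintype V] [DecidableEq V]
    (F : Finset (Finset (V × Bool))) (w : ℕ)
    (hclause : ∀ C ∈ F, ∀ v : V, ¬ ((v, true) ∈ C ∧ (v, false) ∈ C))
    (hwide : ∀ C ∈ F, w ≤ (C.image Prod.fst).card)
    (hunsat : ∀ α : V → Bool, ∃ C ∈ F, ∀ l ∈ C, α l.1 ≠ l.2) :
    2 ^ w ≤ F.card := by
  classical
  set n := Fintype.card V with hn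
  -- w ≤ n
  obtain ⟨C₀, hC₀F, _⟩ := hunsat (fun _ => true)
  have hwn : w ≤ n := le_trans (hwide C₀ hC₀F) (Finset.card_le_univ _)
  -- falsifying set of a clause
  set g : Finset (V × Bool) → V → Bool := fun C v => if (v, true) ∈ C then false else true
    with hg
  have hfilter : ∀ C ∈ F,
      (Finset.univ.filter (fun α : V → Bool => ∀ l ∈ C, α l.1 ≠ l.2))
        = Finset.univ.filter (fun α : V → Bool => ∀ v ∈ C.image Prod.fst, α v = g C v) := by
    intro C hC
    apply Finset.filter_congr
    intro α _
    constructor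
    · intro h v hv
      obtain ⟨⟨v', p⟩, hl, rfl⟩ := Finset.mem_image.mp hv
      by_cases ht : (v', true) ∈ C
      · have := h _ ht
        simp only [hg, ht, if_pos]
        revert this; cases α v' <;> simp
      · have hp : p = false := by
          cases p
          · rfl
          · exact absurd hl ht
        subst hp
        have := h _ hl
        simp only [hg, ht, if_neg, if_false]
        revert this; cases α v' <;> simp
    · intro h l hl
      obtain ⟨v, p⟩ := l
      have hv : v ∈ C.image Prod.fst := Finset.mem_image.mpr ⟨(v, p), hl, rfl⟩
      have hav := h v hv
      cases p
      · have ht : (v, true) ∉ C := fun ht => hclause C hC v ⟨ht, hl⟩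
        simp only [hg, ht, if_neg, if_false] at hav
        simp [hav]
      · simp only [hg, hl, if_pos] at hav
        simp [hav]
  -- covering
  have hcover : (Finset.univ : Finset (V → Bool)) ⊆
      F.biUnion (fun C => Finset.univ.filter (fun α : V → Bool => ∀ l ∈ C, α l.1 ≠ l.2)) := by
    intro α _
    obtain ⟨C, hC, hCα⟩ := hunsat α
    exact Finset.mem_biUnion.mpr ⟨C, hC, Finset.mem_filter.mpr ⟨Finset.mem_univ _, hCα⟩⟩
  have hcard : 2 ^ n ≤ F.card * 2 ^ (n - w) := by
    calc 2 ^ n = (Finset.univ : Finset (V → Bool)).card := by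
          simp [Finset.card_univ, Fintype.card_fun, hn]
      _ ≤ (F.biUnion (fun C =>
            Finset.univ.filter (fun α : V → Bool => ∀ l ∈ C, α l.1 ≠ l.2))).card :=
          Finset.card_le_card hcover
      _ ≤ ∑ C ∈ F, (Finset.univ.filter (fun α : V → Bool => ∀ l ∈ C, α l.1 ≠ l.2)).card :=
          Finset.card_biUnion_le
      _ ≤ ∑ C ∈ F, 2 ^ (n - w) := by
          apply Finset.sum_le_sum
          intro C hC
          rw [hfilter C hC, fixed_on_card (C.image Prod.fst) (g C)]
          exact Nat.pow_le_pow_right (by norm_num)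
            (Nat.sub_le_sub_left (hwide C hC) n)
      _ = F.card * 2 ^ (n - w) := by rw [Finset.sum_const, smul_eq_mul]
  have h2n : 2 ^ n = 2 ^ w * 2 ^ (n - w) := by
    rw [← pow_add, Nat.add_sub_cancel' hwn]
  rw [h2n] at hcard
  exact Nat.le_of_mul_le_mul_right hcard (Nat.pow_pos (by norm_num))
end

section
/- For every n ≥ 1, the completion principle formula CR_n is false: for every x : Fin n → Fin n → Bool there exists z : Bool such that for all a, b : Fin n → Bool, some clause of the matrix of CR_n is falsified, i.e. either there exist i, j ∈ Fin n with x i j = false, z = false and a i = false (clause A_{ij} falsified), or there exist i, j ∈ Fin n with x i j = true, z = true and b j = false (clause B_{ij} falsified), or a i = true for all i ∈ Fin n (clause L_A falsified), or b j = true for all j ∈ Fin n (clause L_B falsified). -/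
/-- For every `n ≥ 1` the completion principle formula `CR_n`
is false: for every assignment of the `x`-variables there is a value of the
universal variable `z` such that every assignment of the `a`- and `b`-variables
falsifies one of the clauses `A_{ij}`, `B_{ij}`, `L_A`, `L_B` of the matrix. -/
theorem completion_principle_false (n : ℕ) (hn : 1 ≤ n)
    (x : Fin n → Fin n → Bool) :
    ∃ z : Bool, ∀ a b : Fin n → Bool,
      (∃ i j : Fin n, x i j = false ∧ z = false ∧ a i = false) ∨
      (∃ i j : Fin n, x i j = true ∧ z = true ∧ b j = false) ∨
      (∀ i : Fin n, a i = true) ∨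
      (∀ j : Fin n, b j = true) := by
  by_cases h : ∃ i : Fin n, ∀ j : Fin n, x i j = true
  · obtain ⟨i, hi⟩ := h
    refine ⟨true, fun a b => ?_⟩
    by_cases hb : ∀ j : Fin n, b j = true
    · exact Or.inr (Or.inr (Or.inr hb))
    · push_neg at hb
      obtain ⟨j, hj⟩ := hb
      exact Or.inr (Or.inl ⟨i, j, hi j, rfl, by simpa using hj⟩)
  · push_neg at h
    refine ⟨false, fun a b => ?_⟩
    by_cases ha : ∀ i : Fin n, a i = true
    · exact Or.inr (Or.inr (Or.inl ha))
    · push_neg at ha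
      obtain ⟨i, hi⟩ := ha
      obtain ⟨j, hj⟩ := h i
      exact Or.inl ⟨i, j, by simpa using hj, rfl, by simpa using hi⟩
end

section
/- Let Π be a function-level MRes-R refutation of CR_n, and let F = {C : (C, H^z) ∈ S} be the set of clause parts of the lines in S. Then F, viewed as a set of clauses over the variables x_{ij} (i, j ∈ Fin n), is unsatisfiable in the strong sense: for every assignment α of the x-variables there is a clause C ∈ F all of whose literals are falsified by α. -/
namespace MResR

/-! ## The completion principle formulas `CR_n` -/

/-- Number of variables of `CR_n`: the `n²` existential variables `x_{ij}`,
then the universal variable `z`, then the existential variables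
`a_0, …, a_{n-1}, b_0, …, b_{n-1}`. -/
def kCR (n : ℕ) : ℕ := n * n + 2 * n + 1

lemma xVar_lt_sq (n : ℕ) (i j : Fin n) : i.val * n + j.val < n * n := by
  have h1 : i.val + 1 ≤ n := i.isLt
  have h2 : (i.val + 1) * n ≤ n * n := Nat.mul_le_mul_right n h1
  have h3 := j.isLt
  nlinarith

lemma xVar_lt (n : ℕ) (i j : Fin n) : i.val * n + j.val < kCR n := by
  have := xVar_lt_sq n i j
  unfold kCR
  omega

/-- The variable `x_{ij}`, at position `i * n + j` of the prefix. -/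
def xVar (n : ℕ) (i j : Fin n) : Fin (kCR n) := ⟨i.val * n + j.val, xVar_lt n i j⟩

/-- The universal variable `z`, at position `n²` of the prefix. -/
def zVar (n : ℕ) : Fin (kCR n) := ⟨n * n, by unfold kCR; omega⟩

/-- The variable `a_i`, at position `n² + 1 + i` of the prefix. -/
def aVar (n : ℕ) (i : Fin n) : Fin (kCR n) :=
  ⟨n * n + 1 + i.val, by have := i.isLt; unfold kCR; omega⟩

/-- The variable `b_j`, at position `n² + 1 + n + j` of the prefix. -/
def bVar (n : ℕ) (j : Fin n) : Fin (kCR n) :=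
  ⟨n * n + 1 + n + j.val, by have := j.isLt; unfold kCR; omega⟩

/-- The clause `A_{ij} = x_{ij} ∨ z ∨ a_i`. -/
def Aclause (n : ℕ) (i j : Fin n) : Clause (kCR n) :=
  {(xVar n i j, true), (zVar n, true), (aVar n i, true)}

/-- The clause `B_{ij} = ¬x_{ij} ∨ ¬z ∨ b_j`. -/
def Bclause (n : ℕ) (i j : Fin n) : Clause (kCR n) :=
  {(xVar n i j, false), (zVar n, false), (bVar n j, true)}

/-- The clause `L_A = ¬a_0 ∨ ⋯ ∨ ¬a_{n-1}`. -/
def LAclause (n : ℕ) : Clause (kCR n) :=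
  Finset.univ.image (fun i : Fin n => (aVar n i, false))

/-- The clause `L_B = ¬b_0 ∨ ⋯ ∨ ¬b_{n-1}`. -/
def LBclause (n : ℕ) : Clause (kCR n) :=
  Finset.univ.image (fun j : Fin n => (bVar n j, false))

/-- The matrix of `CR_n`. -/
def CRmatrix (n : ℕ) : Finset (Clause (kCR n)) :=
  (Finset.univ.image (fun p : Fin n × Fin n => Aclause n p.1 p.2)) ∪
  (Finset.univ.image (fun p : Fin n × Fin n => Bclause n p.1 p.2)) ∪
  {LAclause n, LBclause n}

lemma CRmatrix_clauses (n : ℕ) : ∀ C ∈ CRmatrix n, IsClause C := by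
  intro C hC v hv
  obtain ⟨h1, h2⟩ := hv
  simp only [CRmatrix, Finset.mem_union, Finset.mem_image, Finset.mem_univ, true_and,
    Finset.mem_insert, Finset.mem_singleton] at hC
  rcases hC with (⟨p, hp⟩ | ⟨p, hp⟩) | (h | h)
  · subst hp
    simp [Aclause, Prod.ext_iff] at h2
  · subst hp
    have hxlt := xVar_lt_sq n p.1 p.2
    simp only [Bclause, Finset.mem_insert, Finset.mem_singleton, Prod.mk.injEq] at h1 h2
    rcases h1 with ⟨_, h⟩ | ⟨_, h⟩ | ⟨hv1, _⟩
    · exact absurd h (by simp)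
    · exact absurd h (by simp)
    rcases h2 with ⟨hv2, _⟩ | ⟨hv2, _⟩ | ⟨_, h⟩
    · have := hv1.symm.trans hv2
      simp only [bVar, xVar, Fin.mk.injEq] at this
      omega
    · have := hv1.symm.trans hv2
      simp only [bVar, zVar, Fin.mk.injEq] at this
      omega
    · exact absurd h (by simp)
  · subst h
    simp [LAclause, Prod.ext_iff] at h1
  · subst h
    simp [LBclause, Prod.ext_iff] at h1

/-- The completion principle QBF `CR_n`: all variables existential except `z`. -/
def CRqbf (n : ℕ) : QBF (kCR n) where
  q := fun v => decide (v.val ≠ n * n)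
  matrix := CRmatrix n
  matrix_clauses := CRmatrix_clauses n

/-- The clause `C` contains no variable of `A ∪ B`. -/
def NoAB (n : ℕ) (C : Clause (kCR n)) : Prop :=
  ∀ l ∈ C, (∀ i : Fin n, l.1 ≠ aVar n i) ∧ (∀ j : Fin n, l.1 ≠ bVar n j)

/-- The set `S'` of lines from which there is a directed path in the derivation
graph to the final line, all of whose lines have clauses containing no variable
of `A ∪ B`. -/
inductive InS' {n : ℕ} (π : Deriv (CRqbf n)) : ℕ → Prop where
  | base : NoAB n (π.line (π.m - 1)).C → InS' π (π.m - 1)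
  | step {i j : ℕ} (a b : ℕ) (x : Fin (kCR n)) :
      j < π.m → π.just j = Just.res a b x → (i = a ∨ i = b) →
      NoAB n (π.line i).C → InS' π j → InS' π i

/-- The set `S`: lines of `S'` that are resolvents of two lines neither of
which belongs to `S'`. -/
def InS {n : ℕ} (π : Deriv (CRqbf n)) (i : ℕ) : Prop :=
  i < π.m ∧ InS' π i ∧
    ∃ (a b : ℕ) (x : Fin (kCR n)),
      π.just i = Just.res a b x ∧ ¬ InS' π a ∧ ¬ InS' π b

/-! ## Auxiliary lemmas -/

lemma InS'_noAB {n : ℕ} {π : Deriv (CRqbf n)} {i : ℕ} (h : InS' π i) :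
    NoAB n (π.line i).C := by
  cases h with
  | base h => exact h
  | step a b x _ _ _ h _ => exact h

lemma InS'_lt {n : ℕ} {π : Deriv (CRqbf n)} {i : ℕ} (h : InS' π i) : i < π.m := by
  cases h with
  | base _ => have := π.m_pos; omega
  | step a b x hj hjust hab _ _ =>
      have hs := π.step _ hj
      rw [hjust] at hs
      obtain ⟨ha, hb, -⟩ := hs
      rcases hab with rfl | rfl <;> omega

lemma xVar_ne_aVar {n : ℕ} (i j i' : Fin n) : xVar n i j ≠ aVar n i' := by
  have := xVar_lt_sq n i j
  simp only [xVar, aVar, ne_eq, Fin.mk.injEq]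
  omega

lemma xVar_ne_bVar {n : ℕ} (i j j' : Fin n) : xVar n i j ≠ bVar n j' := by
  have := xVar_lt_sq n i j
  simp only [xVar, bVar, ne_eq, Fin.mk.injEq]
  omega

lemma var_cases {n : ℕ} (hn : 0 < n) (v : Fin (kCR n)) (hv : v.val ≠ n * n) :
    (∃ i j : Fin n, v = xVar n i j) ∨ (∃ i : Fin n, v = aVar n i) ∨
      (∃ j : Fin n, v = bVar n j) := by
  have hlt := v.isLt
  unfold kCR at hlt
  rcases lt_trichotomy v.val (n * n) with h | h | h
  · left
    have hdm : v.val / n * n + v.val % n = v.val := Nat.div_add_mod' v.val n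
    refine ⟨⟨v.val / n, ?_⟩, ⟨v.val % n, Nat.mod_lt _ hn⟩, ?_⟩
    · exact (Nat.div_lt_iff_lt_mul hn).mpr h
    · apply Fin.ext
      simp only [xVar]
      omega
  · exact absurd h hv
  · right
    by_cases h2 : v.val < n * n + 1 + n
    · exact Or.inl ⟨⟨v.val - (n * n + 1), by omega⟩, Fin.ext (by simp only [aVar]; omega)⟩
    · exact Or.inr ⟨⟨v.val - (n * n + 1 + n), by omega⟩,
        Fin.ext (by simp only [bVar]; omega)⟩

lemma q_aVar {n : ℕ} (i : Fin n) : (CRqbf n).q (aVar n i) = true := by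
  simp only [CRqbf, aVar, decide_eq_true_eq]
  omega

lemma q_bVar {n : ℕ} (j : Fin n) : (CRqbf n).q (bVar n j) = true := by
  simp only [CRqbf, bVar, decide_eq_true_eq]
  omega

lemma matrix_hasAB {n : ℕ} (hn : 0 < n) {C : Clause (kCR n)} (hC : C ∈ CRmatrix n) :
    ¬ NoAB n (existSub (CRqbf n) C) := by
  intro hno
  simp only [CRmatrix, Finset.mem_union, Finset.mem_image, Finset.mem_univ, true_and,
    Finset.mem_insert, Finset.mem_singleton] at hC
  rcases hC with (⟨p, rfl⟩ | ⟨p, rfl⟩) | (rfl | rfl)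
  · have hmem : ((aVar n p.1, true) : Fin (kCR n) × Bool) ∈ existSub (CRqbf n) (Aclause n p.1 p.2) := by
      refine Finset.mem_filter.mpr ⟨?_, q_aVar p.1⟩
      simp [Aclause]
    exact (hno _ hmem).1 p.1 rfl
  · have hmem : ((bVar n p.2, true) : Fin (kCR n) × Bool) ∈ existSub (CRqbf n) (Bclause n p.1 p.2) := by
      refine Finset.mem_filter.mpr ⟨?_, q_bVar p.2⟩
      simp [Bclause]
    exact (hno _ hmem).2 p.2 rfl
  · have hmem : ((aVar n ⟨0, hn⟩, false) : Fin (kCR n) × Bool) ∈ existSub (CRqbf n) (LAclause n) := by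
      refine Finset.mem_filter.mpr ⟨?_, q_aVar _⟩
      simp [LAclause]
    exact (hno _ hmem).1 ⟨0, hn⟩ rfl
  · have hmem : ((bVar n ⟨0, hn⟩, false) : Fin (kCR n) × Bool) ∈ existSub (CRqbf n) (LBclause n) := by
      refine Finset.mem_filter.mpr ⟨?_, q_bVar _⟩
      simp [LBclause]
    exact (hno _ hmem).2 ⟨0, hn⟩ rfl

lemma crS_main {n : ℕ} (hn : 0 < n) (π : Deriv (CRqbf n)) (α : Fin n → Fin n → Bool) :
    ∀ i : ℕ, InS' π i →
      (∀ l ∈ (π.line i).C, ∃ i' j' : Fin n, l.1 = xVar n i' j' ∧ α i' j' = ! l.2) →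
      ∃ i₀ : ℕ, InS π i₀ ∧
        ∀ l ∈ (π.line i₀).C, ∃ i' j' : Fin n, l.1 = xVar n i' j' ∧ α i' j' = ! l.2 := by
  intro i
  induction i using Nat.strong_induction_on with
  | _ i IH =>
    intro hS' hfal
    have him : i < π.m := InS'_lt hS'
    have hstep := π.step i him
    cases hjust : π.just i with
    | ax C =>
      rw [hjust] at hstep
      obtain ⟨hCm, hCeq, -⟩ := hstep
      exact absurd (hCeq ▸ InS'_noAB hS') (matrix_hasAB hn hCm)
    | res a b x =>
      rw [hjust] at hstep
      obtain ⟨ha, hb, hqx, hxa, hxb, hCeq, -⟩ := hstep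
      have hqx' : x.val ≠ n * n := by
        simpa only [CRqbf, decide_eq_true_eq] using hqx
      rcases var_cases hn x hqx' with ⟨i0, j0, rfl⟩ | ⟨i0, rfl⟩ | ⟨j0, rfl⟩
      · -- pivot is an x-variable
        cases hα : α i0 j0 with
        | false =>
          have hNoABa : NoAB n (π.line a).C := by
            intro l hl
            by_cases hlx : l = (xVar n i0 j0, true)
            · subst hlx
              exact ⟨fun i' => xVar_ne_aVar _ _ _, fun j' => xVar_ne_bVar _ _ _⟩
            · exact InS'_noAB hS' l
                (hCeq ▸ Finset.mem_union_left _ (Finset.mem_erase.mpr ⟨hlx, hl⟩))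
          have hS'a : InS' π a := InS'.step a b _ him hjust (Or.inl rfl) hNoABa hS'
          refine IH a ha hS'a ?_
          intro l hl
          by_cases hlx : l = (xVar n i0 j0, true)
          · subst hlx; exact ⟨i0, j0, rfl, by simp [hα]⟩
          · exact hfal l
              (hCeq ▸ Finset.mem_union_left _ (Finset.mem_erase.mpr ⟨hlx, hl⟩))
        | true =>
          have hNoABb : NoAB n (π.line b).C := by
            intro l hl
            by_cases hlx : l = (xVar n i0 j0, false)
            · subst hlx
              exact ⟨fun i' => xVar_ne_aVar _ _ _, fun j' => xVar_ne_bVar _ _ _⟩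
            · exact InS'_noAB hS' l
                (hCeq ▸ Finset.mem_union_right _ (Finset.mem_erase.mpr ⟨hlx, hl⟩))
          have hS'b : InS' π b := InS'.step a b _ him hjust (Or.inr rfl) hNoABb hS'
          refine IH b hb hS'b ?_
          intro l hl
          by_cases hlx : l = (xVar n i0 j0, false)
          · subst hlx; exact ⟨i0, j0, rfl, by simp [hα]⟩
          · exact hfal l
              (hCeq ▸ Finset.mem_union_right _ (Finset.mem_erase.mpr ⟨hlx, hl⟩))
      · -- pivot is an a-variable: both parents fail NoAB, so i ∈ S
        refine ⟨i, ⟨him, hS', a, b, _, hjust, ?_, ?_⟩, hfal⟩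
        · intro hS'a; exact (InS'_noAB hS'a _ hxa).1 i0 rfl
        · intro hS'b; exact (InS'_noAB hS'b _ hxb).1 i0 rfl
      · -- pivot is a b-variable
        refine ⟨i, ⟨him, hS', a, b, _, hjust, ?_, ?_⟩, hfal⟩
        · intro hS'a; exact (InS'_noAB hS'a _ hxa).2 j0 rfl
        · intro hS'b; exact (InS'_noAB hS'b _ hxb).2 j0 rfl

end MResR

open MResR in
/-- Let `Π` be a function-level MRes-R refutation of `CR_n` and
let `F` be the set of clause parts of the lines in `S`.  Then `F`, viewed as a
set of clauses over the variables `x_{ij}`, is unsatisfiable in the strong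
sense: every assignment `α` of the `x`-variables falsifies every literal of the
clause of some line of `S`. -/
theorem crS_strongly_unsat {n : ℕ} (hn : 0 < n)
    (π : Deriv (CRqbf n)) (href : IsRefutation π)
    (α : Fin n → Fin n → Bool) :
    ∃ i : ℕ, InS π i ∧
      ∀ l ∈ (π.line i).C, ∃ i' j' : Fin n, l.1 = xVar n i' j' ∧ α i' j' = ! l.2 := by
  refine crS_main hn π α (π.m - 1) (InS'.base ?_) ?_ <;>
    · intro l hl
      rw [href] at hl
      simp at hl
end
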